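/- For every point (t,r,θ,φ,p_t,p_r,p_θ,p_φ) in the Boyer–Lindquist phase-space chart U with r ≠ r_s/2 and (p_t,p_r,p_θ,p_φ) ≠ (0,0,0,0), the vector of momentum partial derivatives (∂P₀/∂p_t, ∂P₀/∂p_r, ∂P₀/∂p_θ, ∂P₀/∂p_φ) at the point is nonzero. In particular, P₀ has no double characteristics away from the horizon {r = r_s/2}, i.e. the operator is of real principal type there. -/

import Mathlib

noncomputable section

/-- Σ = r² + (r_s²/4)·cos²θ -/
def Sig (rs r th : ℝ) : ℝ := r ^ 2 + rs ^ 2 / 4 * Real.cos th ^ 2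

/-- Δ = (r − r_s/2)² -/
def Del (rs r : ℝ) : ℝ := (r - rs / 2) ^ 2

/-- D = r² + r_s²/4 + (r_s·r/Σ)·(r_s²/4)·sin²θ -/
def Dfun (rs r th : ℝ) : ℝ :=
  r ^ 2 + rs ^ 2 / 4 + rs * r / Sig rs r th * (rs ^ 2 / 4) * Real.sin th ^ 2

/-- The Δ-rescaled principal symbol P₀ of P = Δ·□_g for extremal Kerr. -/
def P0 (rs c t r th ph pt pr pth pph : ℝ) : ℝ :=
  Sig rs r th * Real.sin th *
    (Dfun rs r th / c ^ 2 * pt ^ 2 + rs ^ 2 * r / (c * Sig rs r th) * (pt * pph)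
      - Del rs r ^ 2 / Sig rs r th * pr ^ 2 - Del rs r / Sig rs r th * pth ^ 2
      - 1 / Real.sin th ^ 2 * (1 - rs * r / Sig rs r th) * pph ^ 2)

/-!
Up to the factor `Σ sin θ`, `P₀` is a quadratic form in the momenta which is block diagonal:
`p_r` and `p_θ` carry the coefficients `-Δ²/Σ` and `-Δ/Σ`, and `(p_t, p_φ)` form a binary
block whose discriminant is `4Δ / (c² sin² θ)`, by the Kerr identity
`4 DΣ (Σ - r_s r) + r_s⁴ r² sin² θ = 4 Σ² Δ`. Off the horizon `Δ ≠ 0`, so the momentum Hessian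
is nondegenerate and the momentum gradient, being the Hessian applied to `p`, vanishes only at `p = 0`.
-/

lemma eq_zero_of_linear_system {a b c d x y : ℝ} (hdet : a * d - b * c ≠ 0)
    (h₁ : a * x + b * y = 0) (h₂ : c * x + d * y = 0) : x = 0 ∧ y = 0 := by
  constructor
  · have : (a * d - b * c) * x = 0 := by linear_combination d * h₁ - b * h₂
    exact (mul_eq_zero.mp this).resolve_left hdet
  · have : (a * d - b * c) * y = 0 := by linear_combination a * h₂ - c * h₁
    exact (mul_eq_zero.mp this).resolve_left hdet

def blockQuad (k A B C E F x y z w : ℝ) : ℝ :=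
  k * (A * x ^ 2 + B * (x * w) - C * y ^ 2 - E * z ^ 2 - F * w ^ 2)

section BlockQuadratic

variable {k A B C E F : ℝ}

lemma hasDerivAt_blockQuad_fst (x y z w : ℝ) :
    HasDerivAt (fun s => blockQuad k A B C E F s y z w) (k * (2 * A * x + B * w)) x := by
  have h := ((((((hasDerivAt_pow 2 x).const_mul A).add
    (((hasDerivAt_id x).mul_const w).const_mul B)).sub_const (C * y ^ 2)).sub_const
    (E * z ^ 2)).sub_const (F * w ^ 2)).const_mul k
  exact h.congr_deriv (by ring)

lemma hasDerivAt_blockQuad_snd (x y z w : ℝ) :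
    HasDerivAt (fun s => blockQuad k A B C E F x s z w) (-(2 * k * C * y)) y := by
  have h := (((((hasDerivAt_pow 2 y).const_mul C).const_sub (A * x ^ 2 + B * (x * w))).sub_const
    (E * z ^ 2)).sub_const (F * w ^ 2)).const_mul k
  exact h.congr_deriv (by ring)

lemma hasDerivAt_blockQuad_thd (x y z w : ℝ) :
    HasDerivAt (fun s => blockQuad k A B C E F x y s w) (-(2 * k * E * z)) z := by
  have h := ((((hasDerivAt_pow 2 z).const_mul E).const_sub
    (A * x ^ 2 + B * (x * w) - C * y ^ 2)).sub_const (F * w ^ 2)).const_mul k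
  exact h.congr_deriv (by ring)

lemma hasDerivAt_blockQuad_fth (x y z w : ℝ) :
    HasDerivAt (fun s => blockQuad k A B C E F x y z s) (k * (B * x - 2 * F * w)) w := by
  have h := (((((((hasDerivAt_id w).const_mul x).const_mul B).const_add (A * x ^ 2)).sub_const
    (C * y ^ 2)).sub_const (E * z ^ 2)).sub ((hasDerivAt_pow 2 w).const_mul F)).const_mul k
  exact h.congr_deriv (by ring)

lemma blockQuad_eq_zero_of_deriv_eq_zero (hk : k ≠ 0) (hC : C ≠ 0) (hE : E ≠ 0)
    (hdisc : B ^ 2 + 4 * A * F ≠ 0) {x y z w : ℝ}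
    (hx : deriv (fun s => blockQuad k A B C E F s y z w) x = 0)
    (hy : deriv (fun s => blockQuad k A B C E F x s z w) y = 0)
    (hz : deriv (fun s => blockQuad k A B C E F x y s w) z = 0)
    (hw : deriv (fun s => blockQuad k A B C E F x y z s) w = 0) :
    x = 0 ∧ y = 0 ∧ z = 0 ∧ w = 0 := by
  rw [(hasDerivAt_blockQuad_fst x y z w).deriv, mul_eq_zero, or_iff_right hk] at hx
  rw [(hasDerivAt_blockQuad_fth x y z w).deriv, mul_eq_zero, or_iff_right hk] at hw
  rw [(hasDerivAt_blockQuad_snd x y z w).deriv] at hy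
  rw [(hasDerivAt_blockQuad_thd x y z w).deriv] at hz
  obtain ⟨rfl, rfl⟩ := eq_zero_of_linear_system (a := 2 * A) (b := B) (c := B) (d := -(2 * F))
    (by contrapose! hdisc; linear_combination -hdisc) hx (by linear_combination hw)
  refine ⟨rfl, ?_, ?_, rfl⟩
  · simpa [hk, hC] using hy
  · simpa [hk, hE] using hz

end BlockQuadratic

lemma Sig_pos {r : ℝ} (hr : r ≠ 0) (rs th : ℝ) : 0 < Sig rs r th := by
  unfold Sig; positivity

lemma Del_pos {rs r : ℝ} (hr : r ≠ rs / 2) : 0 < Del rs r := by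
  have := sub_ne_zero.mpr hr
  unfold Del; positivity

lemma P0_eq_blockQuad (rs c t r th ph pt pr pth pph : ℝ) :
    P0 rs c t r th ph pt pr pth pph =
      blockQuad (Sig rs r th * Real.sin th) (Dfun rs r th / c ^ 2)
        (rs ^ 2 * r / (c * Sig rs r th)) (Del rs r ^ 2 / Sig rs r th) (Del rs r / Sig rs r th)
        (1 / Real.sin th ^ 2 * (1 - rs * r / Sig rs r th)) pt pr pth pph :=
  rfl

lemma kerr_discriminant_eq {rs c r th : ℝ} (hc : c ≠ 0) (hS : Sig rs r th ≠ 0)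
    (hth : Real.sin th ≠ 0) :
    (rs ^ 2 * r / (c * Sig rs r th)) ^ 2
      + 4 * (Dfun rs r th / c ^ 2) * (1 / Real.sin th ^ 2 * (1 - rs * r / Sig rs r th))
      = 4 * Del rs r / (c ^ 2 * Real.sin th ^ 2) := by
  have hcos : Real.cos th ^ 2 = 1 - Real.sin th ^ 2 := by linarith [Real.sin_sq_add_cos_sq th]
  unfold Dfun
  field_simp
  unfold Sig Del
  rw [hcos]
  ring

theorem momentum_gradient_nonzero_off_horizon_general
    (rs c : ℝ) (hc : 0 < c)
    (t r th ph pt pr pth pph : ℝ)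
    (hr : 0 < r) (hth : Real.sin th ≠ 0)
    (hoff : r ≠ rs / 2)
    (hp : ¬(pt = 0 ∧ pr = 0 ∧ pth = 0 ∧ pph = 0)) :
    ¬(deriv (fun s => P0 rs c t r th ph s pr pth pph) pt = 0 ∧
      deriv (fun s => P0 rs c t r th ph pt s pth pph) pr = 0 ∧
      deriv (fun s => P0 rs c t r th ph pt pr s pph) pth = 0 ∧
      deriv (fun s => P0 rs c t r th ph pt pr pth s) pph = 0) := by
  have hS := Sig_pos hr.ne' rs th
  have hΔ := Del_pos hoff
  have hdisc := kerr_discriminant_eq hc.ne' hS.ne' hth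
  simp only [P0_eq_blockQuad]
  rintro ⟨hpt, hpr, hpth, hpph⟩
  exact hp (blockQuad_eq_zero_of_deriv_eq_zero (mul_ne_zero hS.ne' hth) (by positivity)
    (by positivity) (by rw [hdisc]; positivity) hpt hpr hpth hpph)

/-- away from the horizon (r ≠ r_s/2) and for nonzero covectors, the vector
of momentum partial derivatives (∂P₀/∂p_t, ∂P₀/∂p_r, ∂P₀/∂p_θ, ∂P₀/∂p_φ) is nonzero,
i.e. P₀ has no double characteristics there (real principal type). -/
theorem momentum_gradient_nonzero_off_horizon
    (rs c : ℝ) (hrs : 0 < rs) (hc : 0 < c)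
    (t r th ph pt pr pth pph : ℝ)
    (hr : 0 < r) (hth : Real.sin th ≠ 0)
    (hoff : r ≠ rs / 2)
    (hp : ¬(pt = 0 ∧ pr = 0 ∧ pth = 0 ∧ pph = 0)) :
    ¬(deriv (fun s => P0 rs c t r th ph s pr pth pph) pt = 0 ∧
      deriv (fun s => P0 rs c t r th ph pt s pth pph) pr = 0 ∧
      deriv (fun s => P0 rs c t r th ph pt pr s pph) pth = 0 ∧
      deriv (fun s => P0 rs c t r th ph pt pr pth s) pph = 0) :=
  momentum_gradient_nonzero_off_horizon_general rs c hc t r th ph pt pr pth pph hr hth hoff hp
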